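/- arXiv:1210.8322 — 2 statements merged into one kernel-verified Lean document; each statement's English description precedes it below -/
import Mathlib

section
/- Let Λ be a finite dimensional selfinjective algebra over an algebraically closed field K, with Nakayama functor ν = D Hom_Λ(-, Λ). For a finitely generated Λ-module X with minimal projective presentation P¹ → P⁰ → X → 0, let P_X denote the two-term complex (P¹ → P⁰) in the homotopy category K^b(proj Λ). Then X ≅ νX in mod Λ if and only if P_X ≅ ν P_X in K^b(proj Λ). -/
open CategoryTheory CategoryTheory.Limits ModuleCat

section Prelim
variable {R : Type} [Ring R]

/-- An indecomposable module. -/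
def Indec (M : ModuleCat R) : Prop :=
  Nontrivial M ∧ ∀ N₁ N₂ : Submodule R M, IsCompl N₁ N₂ → N₁ = ⊥ ∨ N₂ = ⊥

/-- `N` lies in `add M`. -/
def InAddM (M N : ModuleCat R) : Prop :=
  ∃ (n : ℕ) (s : N ⟶ ⨁ (fun _ : Fin n => M)) (p : (⨁ (fun _ : Fin n => M)) ⟶ N), s ≫ p = 𝟙 N

/-- `M` is basic with exactly `n` pairwise non-isomorphic indecomposable summands. -/
def BasicOfCard (M : ModuleCat R) (n : ℕ) : Prop :=
  ∃ f : Fin n → ModuleCat R, (∀ i, Indec (f i)) ∧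
    (∀ i j, i ≠ j → IsEmpty (f i ≅ f j)) ∧ Nonempty (M ≅ ⨁ f)

def IsBasicM (M : ModuleCat R) : Prop := ∃ n, BasicOfCard M n

/-- τ-rigid pair. -/
def TauRigidPair (τ : ModuleCat R → ModuleCat R) (X P : ModuleCat R) : Prop :=
  Projective P ∧ (∀ f : X ⟶ τ X, f = 0) ∧ (∀ f : P ⟶ X, f = 0)

/-- Basic support τ-tilting pair: τ-rigid pair with `|X| + |P| = |Λ|`. -/
def SupportTauTiltingPair (τ : ModuleCat R → ModuleCat R) (X P : ModuleCat R) : Prop :=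
  TauRigidPair τ X P ∧
  ∃ a b c : ℕ, BasicOfCard X a ∧ BasicOfCard P b ∧
    BasicOfCard (ModuleCat.of R R) c ∧ a + b = c

/-- Minimal projective presentation `P1 → P0 → X → 0`. -/
def MinProjPres (P1 P0 X : ModuleCat R) (g : P1 ⟶ P0) (f : P0 ⟶ X) : Prop :=
  Projective P1 ∧ Projective P0 ∧ Function.Surjective f ∧
  LinearMap.range g.hom = LinearMap.ker f.hom ∧
  (∀ φ : P0 ⟶ P0, φ ≫ f = f → IsIso φ) ∧ (∀ φ : P1 ⟶ P1, φ ≫ g = g → IsIso φ)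

/-- `τ` is the AR translation attached to the Nakayama functor `ν`:
`τ X = ker (ν P1 → ν P0)` for a minimal projective presentation. -/
def IsARTranslation (ν : ModuleCat R ⥤ ModuleCat R) (τ : ModuleCat R → ModuleCat R) : Prop :=
  ∀ (X P1 P0 : ModuleCat R) (g : P1 ⟶ P0) (f : P0 ⟶ X),
    MinProjPres P1 P0 X g f → Nonempty (τ X ≅ kernel (ν.map g))

/-- Minimal injective copresentation `0 → X → I0 → I1`. -/
def MinInjCopres (X I0 I1 : ModuleCat R) (i : X ⟶ I0) (d : I0 ⟶ I1) : Prop :=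
  Injective I0 ∧ Injective I1 ∧ Function.Injective i ∧
  LinearMap.range i.hom = LinearMap.ker d.hom ∧
  (∀ φ : I0 ⟶ I0, i ≫ φ = i → IsIso φ) ∧ (∀ φ : I1 ⟶ I1, d ≫ φ = d → IsIso φ)

/-- `τ⁻` is the inverse AR translation attached to `ν⁻`. -/
def IsInvARTranslation (νinv : ModuleCat R ⥤ ModuleCat R)
    (τinv : ModuleCat R → ModuleCat R) : Prop :=
  ∀ (X I0 I1 : ModuleCat R) (i : X ⟶ I0) (d : I0 ⟶ I1),
    MinInjCopres X I0 I1 i d → Nonempty (τinv X ≅ cokernel (νinv.map d))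

/-- Torsion class: closed under factor modules and extensions. -/
def IsTorsionClass (T : Set (ModuleCat R)) : Prop :=
  (∀ X ∈ T, ∀ (Y : ModuleCat R) (p : X ⟶ Y), Function.Surjective p → Y ∈ T) ∧
  (∀ (X E Z : ModuleCat R) (i : X ⟶ E) (p : E ⟶ Z), X ∈ T → Z ∈ T →
    Function.Injective i → Function.Surjective p → LinearMap.range i.hom = LinearMap.ker p.hom → E ∈ T)

def IsFunctoriallyFinite (T : Set (ModuleCat R)) : Prop :=
  (∀ M : ModuleCat R, ∃ X ∈ T, ∃ f : M ⟶ X, ∀ X' ∈ T, ∀ g : M ⟶ X', ∃ h : X ⟶ X', f ≫ h = g) ∧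
  (∀ M : ModuleCat R, ∃ X ∈ T, ∃ f : X ⟶ M, ∀ X' ∈ T, ∀ g : X' ⟶ M, ∃ h : X' ⟶ X, h ≫ f = g)

/-- `Fac X`. -/
def FacSet (X : ModuleCat R) : Set (ModuleCat R) :=
  {Y | ∃ (n : ℕ) (p : (⨁ fun _ : Fin n => X) ⟶ Y), Function.Surjective p}

/-- `X` is Ext-projective in the torsion class `T`. -/
def ExtProjectiveIn (T : Set (ModuleCat R)) (X : ModuleCat R) : Prop :=
  X ∈ T ∧ ∀ (Y E : ModuleCat R) (i : Y ⟶ E) (p : E ⟶ X), Y ∈ T →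
    Function.Injective i → Function.Surjective p → LinearMap.range i.hom = LinearMap.ker p.hom →
    ∃ s : X ⟶ E, s ≫ p = 𝟙 X

/-- `Q = P(T)`, the basic additive generator of the Ext-projectives of `T`. -/
def IsExtProjGenerator (T : Set (ModuleCat R)) (Q : ModuleCat R) : Prop :=
  IsBasicM Q ∧ ExtProjectiveIn T Q ∧ ∀ Z : ModuleCat R, (ExtProjectiveIn T Z ↔ InAddM Q Z)

end Prelim


/-!
An equivalence ν carries a minimal projective presentation of `X` to one of `νX`. Minimal
projective presentations of isomorphic modules are isomorphic complexes: comparison maps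
in both directions compose to endomorphisms fixing a right minimal map, hence are
isomorphisms, first on `P⁰` and then on `P¹`. Conversely, `X` is the cokernel of
`P¹ → P⁰`, so isomorphic presentations present isomorphic modules.
-/

section RightMinimal

variable {C : Type*} [Category C]

def IsRightMinimal {P Y : C} (p : P ⟶ Y) : Prop :=
  ∀ φ : P ⟶ P, φ ≫ p = p → IsIso φ

lemma isIso_of_isIso_comp_of_isIso_comp {X Y : C} (u : X ⟶ Y) (v : Y ⟶ X)
    [IsIso (u ≫ v)] [IsIso (v ≫ u)] : IsIso u :=
  have : IsSplitMono u := ⟨⟨v ≫ inv (u ≫ v), by rw [← Category.assoc, IsIso.hom_inv_id]⟩⟩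
  have : Epi u := epi_of_epi v u
  isIso_of_epi_of_isSplitMono u

lemma IsRightMinimal.isIso_of_comm {P P' Y Y' : C} {p : P ⟶ Y} {p' : P' ⟶ Y'}
    (hp : IsRightMinimal p) (hp' : IsRightMinimal p') (e : Y ≅ Y') {u : P ⟶ P'} {v : P' ⟶ P}
    (hu : u ≫ p' = p ≫ e.hom) (hv : v ≫ p = p' ≫ e.inv) : IsIso u :=
  have : IsIso (u ≫ v) := hp _ (by rw [Category.assoc, hv, reassoc_of% hu, e.hom_inv_id,
    Category.comp_id])
  have : IsIso (v ≫ u) := hp' _ (by rw [Category.assoc, hu, reassoc_of% hv, e.inv_hom_id,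
    Category.comp_id])
  isIso_of_isIso_comp_of_isIso_comp u v

lemma IsRightMinimal.map {D : Type*} [Category D] (F : C ⥤ D) [F.Full] [F.Faithful]
    {P Y : C} {p : P ⟶ Y} (hp : IsRightMinimal p) : IsRightMinimal (F.map p) := by
  intro φ hφ
  obtain ⟨ψ, rfl⟩ := F.map_surjective φ
  have := hp ψ (F.map_injective (by simpa using hφ))
  infer_instance

end RightMinimal

namespace MinProjPres

variable {R : Type} [Ring R] {P1 P0 X : ModuleCat R} {g : P1 ⟶ P0} {f : P0 ⟶ X}

lemma isRightMinimal_left (h : MinProjPres P1 P0 X g f) : IsRightMinimal g := h.2.2.2.2.2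

lemma isRightMinimal_right (h : MinProjPres P1 P0 X g f) : IsRightMinimal f := h.2.2.2.2.1

lemma epi (h : MinProjPres P1 P0 X g f) : Epi f :=
  (ModuleCat.epi_iff_surjective f).2 h.2.2.1

lemma comp_eq_zero (h : MinProjPres P1 P0 X g f) : g ≫ f = 0 := by
  ext x
  exact (LinearMap.mem_ker (f := f.hom)).1 (h.2.2.2.1 ▸ LinearMap.mem_range_self g.hom x)

lemma exact (h : MinProjPres P1 P0 X g f) : (ShortComplex.mk g f h.comp_eq_zero).Exact :=
  ShortComplex.moduleCat_exact_iff_range_eq_ker _ |>.2 h.2.2.2.1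

lemma exists_lift (h : MinProjPres P1 P0 X g f) {P : ModuleCat R} [Projective P] (t : P ⟶ P0)
    (ht : t ≫ f = 0) : ∃ l : P ⟶ P1, l ≫ g = t :=
  ⟨_, h.exact.liftFromProjective_comp t ht⟩

lemma map (h : MinProjPres P1 P0 X g f) (F : ModuleCat R ⥤ ModuleCat R) [F.IsEquivalence] :
    MinProjPres (F.obj P1) (F.obj P0) (F.obj X) (F.map g) (F.map f) := by
  have := h.epi
  refine ⟨F.asEquivalence.map_projective_iff _ |>.2 h.1,
    F.asEquivalence.map_projective_iff _ |>.2 h.2.1,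
    (ModuleCat.epi_iff_surjective _).1 inferInstance,
    ShortComplex.moduleCat_exact_iff_range_eq_ker _ |>.1 (h.exact.map F),
    h.isRightMinimal_right.map F, h.isRightMinimal_left.map F⟩

lemma exists_iso_of_iso {P1' P0' X' : ModuleCat R} {g' : P1' ⟶ P0'} {f' : P0' ⟶ X'}
    (h : MinProjPres P1 P0 X g f) (h' : MinProjPres P1' P0' X' g' f') (e : X ≅ X') :
    ∃ (a : P1 ≅ P1') (b : P0 ≅ P0'), g ≫ b.hom = a.hom ≫ g' := by
  have : Projective P0 := h.2.1
  have : Projective P0' := h'.2.1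
  have : Projective P1 := h.1
  have : Projective P1' := h'.1
  have := h.epi
  have := h'.epi
  obtain ⟨u, hu⟩ := Projective.factors (f ≫ e.hom) f'
  obtain ⟨v, hv⟩ := Projective.factors (f' ≫ e.inv) f
  have := h.isRightMinimal_right.isIso_of_comm h'.isRightMinimal_right e hu hv
  let b := asIso u
  have hb : b.inv ≫ f = f' ≫ e.inv := by
    rw [Iso.inv_comp_eq, asIso_hom, reassoc_of% hu, e.hom_inv_id, Category.comp_id]
  obtain ⟨a, ha⟩ := h'.exists_lift (g ≫ u)
    (by rw [Category.assoc, hu, reassoc_of% h.comp_eq_zero, zero_comp])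
  obtain ⟨a', ha'⟩ := h.exists_lift (g' ≫ b.inv)
    (by rw [Category.assoc, hb, reassoc_of% h'.comp_eq_zero, zero_comp])
  have := h.isRightMinimal_left.isIso_of_comm h'.isRightMinimal_left b ha ha'
  exact ⟨asIso a, b, ha.symm⟩

noncomputable def isoOfIso {P1' P0' X' : ModuleCat R} {g' : P1' ⟶ P0'} {f' : P0' ⟶ X'}
    (h : MinProjPres P1 P0 X g f) (h' : MinProjPres P1' P0' X' g' f')
    (a : P1 ≅ P1') (b : P0 ≅ P0') (hab : g ≫ b.hom = a.hom ≫ g') : X ≅ X' :=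
  have := h.epi
  have := h'.epi
  h.exact.gIsCokernel.coconePointsIsoOfNatIso h'.exact.gIsCokernel
    (parallelPair.ext a b hab (by simp))

end MinProjPres

theorem statement0_general
    (Λ : Type) [Ring Λ]
    (ν : ModuleCat Λ ⥤ ModuleCat Λ) [ν.IsEquivalence]
    (X P1 P0 : ModuleCat Λ)
    (g : P1 ⟶ P0) (f : P0 ⟶ X) (hpres : MinProjPres P1 P0 X g f) :
    Nonempty (ν.obj X ≅ X) ↔
      ∃ (a : ν.obj P1 ≅ P1) (b : ν.obj P0 ≅ P0), ν.map g ≫ b.hom = a.hom ≫ g := by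
  have hνpres := hpres.map ν
  constructor
  · rintro ⟨e⟩
    exact hνpres.exists_iso_of_iso hpres e
  · rintro ⟨a, b, hab⟩
    exact ⟨hνpres.isoOfIso hpres a b hab⟩

/-- for a selfinjective algebra Λ, a f.d. module X satisfies X ≅ νX
iff its minimal projective presentation `P_X` satisfies `P_X ≅ ν P_X` in `K^b(proj Λ)`
(for minimal two-term complexes this is an isomorphism of complexes). -/
theorem statement0
    (K : Type) [Field K] [IsAlgClosed K]
    (Λ : Type) [Ring Λ] [Algebra K Λ] [FiniteDimensional K Λ]
    (hself : Module.Injective Λ Λ)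
    (ν : ModuleCat Λ ⥤ ModuleCat Λ) [ν.IsEquivalence] [ν.Additive]
    (hνproj : ∀ M : ModuleCat Λ, Projective M → Projective (ν.obj M))
    (X P1 P0 : ModuleCat Λ) [Module.Finite Λ X]
    (g : P1 ⟶ P0) (f : P0 ⟶ X) (hpres : MinProjPres P1 P0 X g f) :
    Nonempty (ν.obj X ≅ X) ↔
      ∃ (a : ν.obj P1 ≅ P1) (b : ν.obj P0 ≅ P0), ν.map g ≫ b.hom = a.hom ≫ g :=
  statement0_general Λ ν X P1 P0 g f hpres
end

section
/- Let C be a 2-CY triangulated category with cluster tilting object T and Λ = End_C(T). For an object M ∈ C, take a triangle T¹_M → T⁰_M → M → T¹_M[1] with T⁰_M, T¹_M ∈ add T and T⁰_M → M a minimal right (add T)-approximation, and let T_M be the complex (T¹_M → T⁰_M). Suppose Λ is selfinjective. Then M ≅ M[2] in C if and only if Hom_C(T, T_M) ≅ ν Hom_C(T, T_M) in K^b(proj Λ), where ν is the Nakayama functor of Λ. -/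
open CategoryTheory CategoryTheory.Pretriangulated CategoryTheory.Limits
section ClusterPrelim
open CategoryTheory CategoryTheory.Pretriangulated CategoryTheory.Limits

variable {C : Type} [Category C] [Preadditive C]

/-- `Y ∈ add X`. -/
def InAddC [HasFiniteBiproducts C] (X Y : C) : Prop :=
  ∃ (n : ℕ) (s : Y ⟶ ⨁ (fun _ : Fin n => X)) (p : (⨁ (fun _ : Fin n => X)) ⟶ Y), s ≫ p = 𝟙 Y

/-- `Z` is a direct summand of `M`. -/
def IsSummandC (Z M : C) : Prop := ∃ (s : Z ⟶ M) (p : M ⟶ Z), s ≫ p = 𝟙 Z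

/-- Indecomposable object. -/
def IndecC [HasZeroObject C] [HasBinaryBiproducts C] (Z : C) : Prop :=
  ¬ IsZero Z ∧ ∀ (A B : C), Nonempty (Z ≅ A ⊞ B) → IsZero A ∨ IsZero B

def BasicOfCardC [HasZeroObject C] [HasFiniteBiproducts C] [HasBinaryBiproducts C] (M : C) (n : ℕ) : Prop :=
  ∃ f : Fin n → C, (∀ i, IndecC (f i)) ∧ (∀ i j, i ≠ j → IsEmpty (f i ≅ f j)) ∧
    Nonempty (M ≅ ⨁ f)

def IsBasicC [HasZeroObject C] [HasFiniteBiproducts C] [HasBinaryBiproducts C] (M : C) : Prop :=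
  ∃ n, BasicOfCardC M n

/-- Cluster tilting object: `add T = { Y | Hom(T, Y[1]) = 0 }`. -/
def IsClusterTilting [HasFiniteBiproducts C] [HasShift C ℤ] (T : C) : Prop :=
  ∀ Y : C, InAddC T Y ↔ (∀ f : T ⟶ Y⟦(1:ℤ)⟧, f = 0)

/-- `Hom_C(T, X)` is a left module over `Λ = End(T)ᵐᵒᵖ` by precomposition. -/
instance homEndOpModule (T X : C) : Module (End T)ᵐᵒᵖ (T ⟶ X) where
  smul a f := a.unop ≫ f
  one_smul f := Category.id_comp f
  mul_smul a b f := by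
    show (a * b).unop ≫ f = a.unop ≫ (b.unop ≫ f)
    simp [End.mul_def]
  smul_zero a := Limits.comp_zero
  smul_add a f g := Preadditive.comp_add _ _ _ _ _ _
  add_smul a b f := Preadditive.add_comp _ _ _ _ _ _
  zero_smul f := Limits.zero_comp

/-- `X̄ = Hom_C(T, X)` as a module over `Λ = End(T)ᵐᵒᵖ`. -/
def Mbar (T X : C) : ModuleCat (End T)ᵐᵒᵖ := ModuleCat.of (End T)ᵐᵒᵖ (T ⟶ X)

/-- Functoriality of `X̄` in `X`. -/
def MbarMap (T : C) {X Y : C} (h : X ⟶ Y) : Mbar T X ⟶ Mbar T Y :=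
  ModuleCat.ofHom
  { toFun := fun f => f ≫ h
    map_add' := fun f g => Preadditive.add_comp _ _ _ _ _ _
    map_smul' := fun a f => by
      show (a.unop ≫ f) ≫ h = a.unop ≫ (f ≫ h)
      simp }

end ClusterPrelim

/-!
Because `ν` is an autoequivalence, `Hom_C(T, T⟦2⟧) ≅ ν Λ` is a projective `Λ`-module. Splitting a
cover `Hom_C(T, Tⁿ) ↠ Hom_C(T, T⟦2⟧)` inside `add T` gives a summand `Z` of `Tⁿ` and `t : Z ⟶ T⟦2⟧`
inducing `Hom_C(T, Z) ≅ Hom_C(T, T⟦2⟧)`; the cone of `t` then splits off, and the `2`-Calabi–Yau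
duality leaves it no room, so `T⟦2⟧ ≅ Z ∈ add T`. Hence `add T` is stable under `⟦2⟧`, and the
shift of the triangle `T¹_M → T⁰_M → M →` is a minimal approximation triangle of `M⟦2⟧`. Such
triangles are unique up to isomorphism, so `M ≅ M⟦2⟧` iff `T_M ≅ T_M⟦2⟧`. As `Hom_C(T, -)` is
fully faithful on `add T` and `ν Hom_C(T, -) ≅ Hom_C(T, -⟦2⟧)` there, this is the condition
`Hom_C(T, T_M) ≅ ν Hom_C(T, T_M)`.
-/

section HomFunctor

variable {C : Type} [Category C] [Preadditive C]

lemma MbarMap_id (T X : C) : MbarMap T (𝟙 X) = 𝟙 (Mbar T X) :=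
  ModuleCat.hom_ext (LinearMap.ext Category.comp_id)

lemma MbarMap_comp (T : C) {X Y Z : C} (h : X ⟶ Y) (k : Y ⟶ Z) :
    MbarMap T (h ≫ k) = MbarMap T h ≫ MbarMap T k :=
  ModuleCat.hom_ext (LinearMap.ext fun f => (Category.assoc f h k).symm)

def mbarFunctor (T : C) : C ⥤ ModuleCat (End T)ᵐᵒᵖ where
  obj := Mbar T
  map := MbarMap T
  map_id := MbarMap_id T
  map_comp := MbarMap_comp T

lemma linearMap_comp_left {T Z Y : C} (φ : (T ⟶ Z) →ₗ[(End T)ᵐᵒᵖ] (T ⟶ Y)) (k : T ⟶ T)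
    (m : T ⟶ Z) : φ (k ≫ m) = k ≫ φ m :=
  φ.map_smul (MulOpposite.op k) m

lemma InAddC.of_retract [HasFiniteBiproducts C] {T Y Z : C} (hY : InAddC T Y) (i : Z ⟶ Y)
    (q : Y ⟶ Z) (hiq : i ≫ q = 𝟙 Z) : InAddC T Z := by
  obtain ⟨n, s, p, hsp⟩ := hY
  exact ⟨n, i ≫ s, p ≫ q, by simp [reassoc_of% hsp, hiq]⟩

lemma inAddC_self [HasFiniteBiproducts C] (T : C) : InAddC T T :=
  ⟨1, biproduct.ι (fun _ : Fin 1 => T) 0, biproduct.π _ 0, by simp⟩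

lemma inAddC_biproduct [HasFiniteBiproducts C] (T : C) (n : ℕ) :
    InAddC T (⨁ fun _ : Fin n => T) :=
  ⟨n, 𝟙 _, 𝟙 _, Category.id_comp _⟩

lemma projective_Mbar_self (T : C) : Projective (Mbar T T) :=
  Projective.of_iso
    (LinearEquiv.toModuleIso
      { toFun := MulOpposite.unop
        invFun := MulOpposite.op
        map_add' := fun _ _ => rfl
        map_smul' := fun _ _ => rfl
        left_inv := fun _ => rfl
        right_inv := fun _ => rfl })
    (ModuleCat.projective_of_free (Module.Basis.singleton Unit (End T)ᵐᵒᵖ))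

lemma hom_bijective_of_isIso_MbarMap {T Z X : C} (t : Z ⟶ X) [IsIso (MbarMap T t)] :
    Function.Bijective fun y : T ⟶ Z => y ≫ t :=
  ConcreteCategory.bijective_of_isIso (MbarMap T t)

variable [HasFiniteBiproducts C] {T Z : C}

lemma InAddC.hom_ext (hZ : InAddC T Z) {Y : C} {h h' : Z ⟶ Y}
    (H : ∀ f : T ⟶ Z, f ≫ h = f ≫ h') : h = h' := by
  obtain ⟨n, s, p, hsp⟩ := hZ
  have hp : p ≫ h = p ≫ h' := biproduct.hom_ext' _ _ fun j => by
    simpa using H (biproduct.ι (fun _ : Fin n => T) j ≫ p)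
  rw [← Category.id_comp h, ← Category.id_comp h', ← hsp, Category.assoc, Category.assoc, hp]

lemma InAddC.MbarMap_injective (hZ : InAddC T Z) (Y : C) :
    Function.Injective (MbarMap T : (Z ⟶ Y) → _) := fun _ _ H =>
  hZ.hom_ext fun f => congrArg (fun F => ModuleCat.Hom.hom F f) H

lemma InAddC.MbarMap_surjective (hZ : InAddC T Z) (Y : C) :
    Function.Surjective (MbarMap T : (Z ⟶ Y) → _) := by
  intro F
  obtain ⟨n, s, p, hsp⟩ := hZ
  let φ : (T ⟶ Z) →ₗ[(End T)ᵐᵒᵖ] (T ⟶ Y) := F.hom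
  let G : Fin n → (T ⟶ Y) := fun i => φ (biproduct.ι (fun _ => T) i ≫ p)
  refine ⟨s ≫ biproduct.desc G, ModuleCat.hom_ext (LinearMap.ext fun (f : T ⟶ Z) => ?_)⟩
  have hf : f = ∑ i, (f ≫ s ≫ biproduct.π _ i) ≫ biproduct.ι (fun _ => T) i ≫ p := by
    conv_lhs => rw [← Category.comp_id f, ← hsp, ← Category.id_comp p, ← biproduct.total]
    simp only [Preadditive.sum_comp, Preadditive.comp_sum, Category.assoc]
  -- `φ` is `Λ`-linear, so it is determined by its values `G i` on the `ιᵢ ≫ p`.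
  change f ≫ s ≫ biproduct.desc G = φ f
  conv_rhs => rw [hf]
  rw [map_sum, biproduct.desc_eq, Preadditive.comp_sum, Preadditive.comp_sum]
  refine Finset.sum_congr rfl fun i _ => ?_
  rw [linearMap_comp_left]
  simp only [Category.assoc, G]

lemma InAddC.exists_iso_MbarMap_eq (hZ : InAddC T Z) {Y : C} (hY : InAddC T Y)
    (F : Mbar T Z ≅ Mbar T Y) : ∃ e : Z ≅ Y, MbarMap T e.hom = F.hom := by
  obtain ⟨h, hh⟩ := hZ.MbarMap_surjective Y F.hom
  obtain ⟨h', hh'⟩ := hY.MbarMap_surjective Z F.inv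
  refine ⟨⟨h, h', hZ.MbarMap_injective Z ?_, hY.MbarMap_injective Y ?_⟩, hh⟩
  · rw [MbarMap_comp, hh, hh', F.hom_inv_id, MbarMap_id]
  · rw [MbarMap_comp, hh, hh', F.inv_hom_id, MbarMap_id]

lemma nonempty_arrow_iso_iff {D : Type*} [Category D] {X Y X' Y' : D} (f : X ⟶ Y) (f' : X' ⟶ Y') :
    Nonempty (Arrow.mk f ≅ Arrow.mk f') ↔
      ∃ (a : X ≅ X') (b : Y ≅ Y'), f ≫ b.hom = a.hom ≫ f' :=
  ⟨fun ⟨e⟩ => ⟨Arrow.leftFunc.mapIso e, Arrow.rightFunc.mapIso e, e.hom.w.symm⟩,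
    fun ⟨a, b, h⟩ => ⟨Arrow.isoMk a b h.symm⟩⟩

lemma nonempty_arrow_iso_iff_MbarMap {A B A' B' : C} (hA : InAddC T A) (hB : InAddC T B)
    (hA' : InAddC T A') (hB' : InAddC T B') (g : A ⟶ B) (g' : A' ⟶ B') :
    Nonempty (Arrow.mk g ≅ Arrow.mk g') ↔
      Nonempty (Arrow.mk (MbarMap T g) ≅ Arrow.mk (MbarMap T g')) := by
  refine ⟨fun ⟨e⟩ => ⟨(mbarFunctor T).mapArrow.mapIso e⟩, ?_⟩
  rw [nonempty_arrow_iso_iff, nonempty_arrow_iso_iff]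
  rintro ⟨a, b, hab⟩
  obtain ⟨a', ha'⟩ := hA.exists_iso_MbarMap_eq hA' a
  obtain ⟨b', hb'⟩ := hB.exists_iso_MbarMap_eq hB' b
  exact ⟨a', b', hA.MbarMap_injective B' (by rw [MbarMap_comp, MbarMap_comp, ha', hb', hab])⟩

end HomFunctor

section ClusterTilting

variable {C : Type} [Category C] [Preadditive C] [HasFiniteBiproducts C] {T : C}

lemma hom_map_biproduct_eq_zero {X : C} (F : C ⥤ C) [F.Additive] {n : ℕ}
    (hX : ∀ f : T ⟶ F.obj X, f = 0) (g : T ⟶ F.obj (⨁ fun _ : Fin n => X)) : g = 0 := by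
  rw [← Category.comp_id g, ← F.map_id, ← biproduct.total, F.map_sum, Preadditive.comp_sum]
  exact Finset.sum_eq_zero fun j _ => by rw [F.map_comp, ← Category.assoc, hX (_ ≫ _), zero_comp]

variable [HasShift C ℤ]

lemma IsClusterTilting.eq_zero (hT : IsClusterTilting T) {Z Y : C} (hZ : InAddC T Z)
    (hY : InAddC T Y) (f : Z ⟶ Y⟦(1:ℤ)⟧) : f = 0 :=
  hZ.hom_ext fun u => by rw [(hT Y).1 hY (u ≫ f), comp_zero]

lemma IsClusterTilting.inAddC_shift [∀ n : ℤ, (shiftFunctor C n).Additive]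
    (hT : IsClusterTilting T) {n : ℤ} (hTn : InAddC T (T⟦n⟧)) {Z : C} (hZ : InAddC T Z) :
    InAddC T (Z⟦n⟧) := by
  obtain ⟨k, s, p, hsp⟩ := hZ
  refine (hT _).2 fun f => ?_
  have hs : f ≫ (s⟦n⟧')⟦(1:ℤ)⟧' = 0 :=
    hom_map_biproduct_eq_zero (shiftFunctor C n ⋙ shiftFunctor C (1:ℤ)) ((hT _).1 hTn) _
  rw [← Category.comp_id f, ← CategoryTheory.Functor.map_id, ← CategoryTheory.Functor.map_id, ← hsp,
    Functor.map_comp, Functor.map_comp, ← Category.assoc, hs, zero_comp]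

end ClusterTilting

section Projective

variable {C : Type} [Category C] [Preadditive C] [HasFiniteBiproducts C]

lemma exists_epi_MbarMap_biproduct (K : Type) [Field K] [Linear K C] (T X : C)
    [FiniteDimensional K (T ⟶ X)] :
    ∃ (n : ℕ) (p : (⨁ fun _ : Fin n => T) ⟶ X), Epi (MbarMap T p) := by
  let b := Module.finBasis K (T ⟶ X)
  refine ⟨_, biproduct.desc b, (ModuleCat.epi_iff_surjective _).2 fun f => ?_⟩
  refine ⟨biproduct.lift fun i => b.repr f i • 𝟙 T, ?_⟩
  change biproduct.lift _ ≫ biproduct.desc b = f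
  simp only [biproduct.lift_desc, Linear.smul_comp, Category.id_comp]
  exact b.sum_repr f

/-- A section `j` of the cover lifts to an idempotent `e` of `Tⁿ`, and `Z` is the image of `e`. -/
lemma exists_isIso_MbarMap_of_projective [IsIdempotentComplete C] {T X : C} {n : ℕ}
    (p : (⨁ fun _ : Fin n => T) ⟶ X) [Epi (MbarMap T p)] (hX : Projective (Mbar T X)) :
    ∃ (Z : C) (t : Z ⟶ X), InAddC T Z ∧ IsIso (MbarMap T t) := by
  let j := Projective.factorThru (𝟙 _) (MbarMap T p)
  have hj : j ≫ MbarMap T p = 𝟙 _ := Projective.factorThru_comp _ _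
  have hB := inAddC_biproduct T n
  obtain ⟨e, he⟩ := hB.MbarMap_surjective _ (MbarMap T p ≫ j)
  have hee : e ≫ e = e := hB.MbarMap_injective _ <| by
    rw [MbarMap_comp, he, Category.assoc, reassoc_of% hj]
  obtain ⟨Z, i, q, hiq, hqi⟩ := IsIdempotentComplete.idempotents_split _ e hee
  refine ⟨Z, i ≫ p, hB.of_retract i q hiq, ⟨j ≫ MbarMap T q, ?_, ?_⟩⟩
  · rw [MbarMap_comp, Category.assoc, reassoc_of% he.symm, ← MbarMap_comp, ← MbarMap_comp, ← hqi]
    simp only [Category.assoc, reassoc_of% hiq, hiq, MbarMap_id]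
  · rw [Category.assoc, ← MbarMap_comp, ← Category.assoc, hqi, MbarMap_comp, he]
    simp only [Category.assoc, reassoc_of% hj, hj]

end Projective

section Triangulated

variable {C : Type} [Category C] [Preadditive C] [HasZeroObject C] [HasShift C ℤ]
  [∀ n : ℤ, (shiftFunctor C n).Additive] [Pretriangulated C]

lemma shift_distinguished_of_even {X Y Z : C} (f : X ⟶ Y) (g : Y ⟶ Z) (h : Z ⟶ X⟦(1:ℤ)⟧)
    (hT : Triangle.mk f g h ∈ distTriang C) {n : ℤ} (hn : Even n) :
    Triangle.mk (f⟦n⟧') (g⟦n⟧') (h⟦n⟧' ≫ (shiftFunctorComm C 1 n).hom.app X) ∈ distTriang C := by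
  have := Triangle.shift_distinguished _ hT n
  simp only [Triangle.shiftFunctor_eq, Triangle.shiftFunctor_obj, Int.negOnePow_even n hn,
    Triangle.mk_mor₁, Triangle.mk_mor₂, Triangle.mk_mor₃, Functor.comp_obj, one_smul] at this
  exact this

variable [HasFiniteBiproducts C] {T : C}

/-- The third object `X` has `Hom_C(T, X) = 0`, so `X⟦-1⟧ ∈ add T`, where `Hom_C(T, -)` detects
that `X⟦-1⟧ ⟶ Tr.obj₁` vanishes. -/
lemma IsClusterTilting.mor₃_eq_zero (hT : IsClusterTilting T) (Tr : Triangle C)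
    (hTr : Tr ∈ distTriang C) (h₁ : InAddC T Tr.obj₁) [IsIso (MbarMap T Tr.mor₁)] :
    Tr.mor₃ = 0 := by
  obtain ⟨inj, surj⟩ := hom_bijective_of_isIso_MbarMap (T := T) Tr.mor₁
  have hHom : ∀ ψ : T ⟶ Tr.obj₃, ψ = 0 := fun ψ => by
    obtain ⟨χ, rfl⟩ := Tr.coyoneda_exact₃ hTr ψ (hT.eq_zero (inAddC_self T) h₁ _)
    obtain ⟨y, rfl⟩ := surj χ
    simp [comp_distTriang_mor_zero₁₂ _ hTr]
  have hW : InAddC T Tr.invRotate.obj₁ := (hT _).2 fun f => by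
    let e : Tr.invRotate.obj₁⟦(1:ℤ)⟧ ≅ Tr.obj₃ :=
      (shiftFunctorCompIsoId C (-1:ℤ) 1 (by norm_num)).app _
    rw [← cancel_mono e.hom, hHom (f ≫ e.hom), zero_comp]
  have h0 := comp_distTriang_mor_zero₁₂ _ (inv_rot_of_distTriang _ hTr)
  have hd : Tr.invRotate.mor₁ = 0 := hW.hom_ext fun y => inj
    (show (y ≫ Tr.invRotate.mor₁) ≫ Tr.invRotate.mor₂ = (y ≫ 0) ≫ Tr.invRotate.mor₂ by
      rw [Category.assoc, h0, comp_zero, comp_zero, zero_comp])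
  have : Mono Tr.mor₁ := Tr.invRotate.mono₂ (inv_rot_of_distTriang _ hTr) hd
  exact Tr.mor₃_eq_zero_of_mono₁ hTr inferInstance

end Triangulated

section CalabiYau

variable {K : Type} [Field K] {C : Type} [Category C] [Preadditive C] [Linear K C] [HasShift C ℤ]

lemma finrank_hom_eq_finrank_hom_shift_two
    (cy : ∀ X Y : C, Nonempty ((X ⟶ Y) ≃ₗ[K] Module.Dual K (Y ⟶ X⟦(2:ℤ)⟧))) (X Y : C) :
    Module.finrank K (X ⟶ Y) = Module.finrank K (Y ⟶ X⟦(2:ℤ)⟧) := by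
  rw [(cy X Y).some.finrank_eq, Subspace.dual_finrank_eq]

variable [HasZeroObject C] [∀ n : ℤ, (shiftFunctor C n).Additive] [Pretriangulated C]
  [HasFiniteBiproducts C]

/-- The cone triangle `Z ⟶ T⟦2⟧ ⟶ Q ⟶` of `t` splits (`IsClusterTilting.mor₃_eq_zero`), so
`T⟦2⟧ ≅ Z ⊞ Q`; the `2`-Calabi–Yau duality gives
`dim End(T⟦2⟧) = dim Hom(T, T⟦2⟧) = dim Hom(T, Z) = dim Hom(Z, T⟦2⟧)`, which leaves no room
for `Q`. -/
lemma isIso_of_isIso_MbarMap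
    (cy : ∀ X Y : C, Nonempty ((X ⟶ Y) ≃ₗ[K] Module.Dual K (Y ⟶ X⟦(2:ℤ)⟧))) {T : C}
    [FiniteDimensional K (T⟦(2:ℤ)⟧ ⟶ T⟦(2:ℤ)⟧)] (hT : IsClusterTilting T) {Z : C}
    (hZ : InAddC T Z) (t : Z ⟶ T⟦(2:ℤ)⟧) [IsIso (MbarMap T t)] : IsIso t := by
  obtain ⟨Q, u, v, hTr⟩ := distinguished_cocone_triangle t
  have : IsIso (MbarMap T (Triangle.mk t u v).mor₁) := inferInstanceAs (IsIso (MbarMap T t))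
  obtain ⟨e, he₁, he₂⟩ : ∃ e : T⟦(2:ℤ)⟧ ≅ Z ⊞ Q, t ≫ e.hom = biprod.inl ∧ u = e.hom ≫ biprod.snd :=
    exists_iso_binaryBiproduct_of_distTriang _ hTr (hT.mor₃_eq_zero _ hTr hZ)
  have hsurj : Function.Surjective (Linear.leftComp K (T⟦(2:ℤ)⟧) t) := fun ψ =>
    ⟨e.hom ≫ biprod.fst ≫ ψ, by simp [reassoc_of% he₁]⟩
  have := Module.Finite.of_surjective _ hsurj
  have hdim : Module.finrank K (T⟦(2:ℤ)⟧ ⟶ T⟦(2:ℤ)⟧) = Module.finrank K (Z ⟶ T⟦(2:ℤ)⟧) := by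
    rw [← finrank_hom_eq_finrank_hom_shift_two cy T (T⟦(2:ℤ)⟧),
      ← finrank_hom_eq_finrank_hom_shift_two cy T Z]
    exact (LinearEquiv.ofBijective (Linear.rightComp K T t)
      (hom_bijective_of_isIso_MbarMap t)).finrank_eq.symm
  have hinj := (LinearMap.injective_iff_surjective_of_finrank_eq_finrank hdim).2 hsurj
  let σ : Q ⟶ T⟦(2:ℤ)⟧ := biprod.inr ≫ e.inv
  have hσ : σ ≫ u = 𝟙 Q := by simp [σ, he₂]
  have htu : t ≫ u = 0 := comp_distTriang_mor_zero₁₂ _ hTr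
  have hu : u ≫ σ = 0 := hinj (show t ≫ u ≫ σ = t ≫ 0 by rw [reassoc_of% htu, zero_comp, comp_zero])
  have hQ : IsZero Q := by
    rw [IsZero.iff_id_eq_zero]
    calc 𝟙 Q = σ ≫ (u ≫ σ) ≫ u := by simp only [Category.assoc, reassoc_of% hσ, hσ]
      _ = 0 := by rw [hu, zero_comp, comp_zero]
  exact (Triangle.isZero₃_iff_isIso₁ _ hTr).1 hQ

lemma IsClusterTilting.inAddC_shift_two_self [IsIdempotentComplete C]
    (cy : ∀ X Y : C, Nonempty ((X ⟶ Y) ≃ₗ[K] Module.Dual K (Y ⟶ X⟦(2:ℤ)⟧))) {T : C}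
    [FiniteDimensional K (T⟦(2:ℤ)⟧ ⟶ T⟦(2:ℤ)⟧)] (hT : IsClusterTilting T)
    (hproj : Projective (Mbar T (T⟦(2:ℤ)⟧))) : InAddC T (T⟦(2:ℤ)⟧) := by
  have : FiniteDimensional K (T ⟶ T⟦(2:ℤ)⟧) := Module.Finite.equiv (cy T (T⟦(2:ℤ)⟧)).some.symm
  obtain ⟨n, p, _⟩ := exists_epi_MbarMap_biproduct K T (T⟦(2:ℤ)⟧)
  obtain ⟨Z, t, hZ, _⟩ := exists_isIso_MbarMap_of_projective p hproj
  have := isIso_of_isIso_MbarMap cy hT hZ t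
  exact hZ.of_retract (inv t) t (IsIso.inv_hom_id t)

end CalabiYau

section Approximation

lemma CategoryTheory.Functor.isIso_of_comp_map_eq {C D : Type*} [Category C] [Category D]
    (F : C ⥤ D) [F.Full] [F.Faithful]
    {A M : C} {w : A ⟶ M} (hw : ∀ φ : A ⟶ A, φ ≫ w = w → IsIso φ) (ψ : F.obj A ⟶ F.obj A)
    (hψ : ψ ≫ F.map w = F.map w) : IsIso ψ := by
  have := hw (F.preimage ψ) (F.map_injective (by rw [F.map_comp, F.map_preimage, hψ]))
  rw [← F.map_preimage ψ]
  infer_instance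

variable {C : Type} [Category C] [Preadditive C] [HasFiniteBiproducts C]

structure IsMinimalRightApprox (T : C) {A M : C} (w : A ⟶ M) : Prop where
  mem : InAddC T A
  lift : ∀ Z : C, InAddC T Z → ∀ h : Z ⟶ M, ∃ h' : Z ⟶ A, h' ≫ w = h
  minimal : ∀ φ : A ⟶ A, φ ≫ w = w → IsIso φ

lemma IsMinimalRightApprox.isIso {T A A' M M' : C} {w : A ⟶ M} {w' : A' ⟶ M'}
    (hw : IsMinimalRightApprox T w) (hw' : IsMinimalRightApprox T w') (φ : M ≅ M')
    (u : A ⟶ A') (hu : u ≫ w' = w ≫ φ.hom) : IsIso u := by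
  obtain ⟨v, hv⟩ := hw.lift A' hw'.mem (w' ≫ φ.inv)
  have := hw.minimal (u ≫ v) (by simp [hv, reassoc_of% hu])
  have := hw'.minimal (v ≫ u) (by simp [hu, reassoc_of% hv])
  have : Mono u := mono_of_mono u v
  have : IsSplitEpi u := ⟨⟨inv (v ≫ u) ≫ v, by simp⟩⟩
  exact isIso_of_mono_of_isSplitEpi u

variable [HasZeroObject C] [HasShift C ℤ] [∀ n : ℤ, (shiftFunctor C n).Additive]
  [Pretriangulated C]

lemma IsClusterTilting.lift_mor₂ {T : C} (hT : IsClusterTilting T) (Tr : Triangle C)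
    (hTr : Tr ∈ distTriang C) (h₁ : InAddC T Tr.obj₁) (Z : C) (hZ : InAddC T Z)
    (h : Z ⟶ Tr.obj₃) : ∃ h' : Z ⟶ Tr.obj₂, h' ≫ Tr.mor₂ = h := by
  obtain ⟨h', hh'⟩ := Tr.coyoneda_exact₃ hTr h (hT.eq_zero hZ h₁ _)
  exact ⟨h', hh'.symm⟩

lemma IsMinimalRightApprox.nonempty_iso_iff {T : C} (Tr Tr' : Triangle C) (hTr : Tr ∈ distTriang C)
    (hTr' : Tr' ∈ distTriang C) (hw : IsMinimalRightApprox T Tr.mor₂)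
    (hw' : IsMinimalRightApprox T Tr'.mor₂) :
    Nonempty (Tr.obj₃ ≅ Tr'.obj₃) ↔ Nonempty (Arrow.mk Tr.mor₁ ≅ Arrow.mk Tr'.mor₁) := by
  refine ⟨fun ⟨φ⟩ => ?_, fun ⟨e⟩ => ?_⟩
  · obtain ⟨u₂, hu₂⟩ := hw'.lift _ hw.mem (Tr.mor₂ ≫ φ.hom)
    have := hw.isIso hw' φ u₂ hu₂
    obtain ⟨u₁, hu₁, hu₃⟩ :=
      complete_distinguished_triangle_morphism₁ Tr Tr' hTr hTr' u₂ φ.hom hu₂.symm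
    have : IsIso u₁ := isIso₁_of_isIso₂₃ ⟨u₁, u₂, φ.hom, hu₁, hu₂.symm, hu₃⟩ hTr hTr'
      inferInstance inferInstance
    exact ⟨Arrow.isoMk (asIso u₁) (asIso u₂) hu₁.symm⟩
  · obtain ⟨e', -⟩ := exists_iso_of_arrow_iso Tr Tr' hTr hTr' e
    exact ⟨Triangle.π₃.mapIso e'⟩

end Approximation

/-- let T be cluster tilting with Λ = End(T) selfinjective, and
`T¹_M → T⁰_M → M → T¹_M[1]` a triangle with minimal right add T-approximation.
Then M ≅ M[2] iff the two-term complex `Hom(T, T_M)` is isomorphic to its image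
under the Nakayama functor ν (as minimal complexes, a compatible levelwise
isomorphism). -/
theorem statement9
    (K : Type) [Field K] [IsAlgClosed K]
    (C : Type) [Category C] [Preadditive C] [CategoryTheory.Linear K C]
    [HasZeroObject C] [HasShift C ℤ] [∀ n : ℤ, (shiftFunctor C n).Additive]
    [Pretriangulated C] [HasFiniteBiproducts C] [IsIdempotentComplete C]
    (hfin : ∀ X Y : C, FiniteDimensional K (X ⟶ Y))
    (cy : ∀ X Y : C, Nonempty ((X ⟶ Y) ≃ₗ[K] Module.Dual K (Y ⟶ X⟦(2:ℤ)⟧)))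
    (T : C) (hT : IsClusterTilting T)
    (hself : Module.Injective (End T)ᵐᵒᵖ (End T)ᵐᵒᵖ)
    -- the Nakayama functor of Λ = End(T)ᵐᵒᵖ, with the canonical identification
    -- ν ∘ Hom(T,-) ≅ Hom(T, -[2]) on add T (Keller–Reiten)
    (ν : ModuleCat (End T)ᵐᵒᵖ ⥤ ModuleCat (End T)ᵐᵒᵖ) [ν.IsEquivalence] [ν.Additive]
    (η : ∀ Z : C, InAddC T Z → (ν.obj (Mbar T Z) ≅ Mbar T (Z⟦(2:ℤ)⟧)))
    (hη : ∀ (Z W : C) (hZ : InAddC T Z) (hW : InAddC T W) (h : Z ⟶ W),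
      ν.map (MbarMap T h) ≫ (η W hW).hom = (η Z hZ).hom ≫ MbarMap T (h⟦(2:ℤ)⟧'))
    (M T1 T0 : C) (hT1 : InAddC T T1) (hT0 : InAddC T T0)
    (g : T1 ⟶ T0) (w : T0 ⟶ M) (c : M ⟶ T1⟦(1:ℤ)⟧)
    (htri : Triangle.mk g w c ∈ distTriang C)
    (happrox : ∀ Z : C, InAddC T Z → ∀ h : Z ⟶ M, ∃ h' : Z ⟶ T0, h' ≫ w = h)
    (hmin : ∀ φ : T0 ⟶ T0, φ ≫ w = w → IsIso φ) :
    Nonempty (M ≅ M⟦(2:ℤ)⟧) ↔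
      ∃ (a : ν.obj (Mbar T T1) ≅ Mbar T T1) (b : ν.obj (Mbar T T0) ≅ Mbar T T0),
        ν.map (MbarMap T g) ≫ b.hom = a.hom ≫ MbarMap T g := by
  have := hfin (T⟦(2:ℤ)⟧) (T⟦(2:ℤ)⟧)
  have hS2 : InAddC T (T⟦(2:ℤ)⟧) := hT.inAddC_shift_two_self cy <|
    Projective.of_iso (η T (inAddC_self T))
      ((ν.asEquivalence.map_projective_iff _).2 (projective_Mbar_self T))
  have hT1' := hT.inAddC_shift hS2 hT1
  have hT0' := hT.inAddC_shift hS2 hT0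
  have htri₂ := shift_distinguished_of_even g w c htri even_two
  have hw : IsMinimalRightApprox T w := ⟨hT0, happrox, hmin⟩
  have hw₂ : IsMinimalRightApprox T (w⟦(2:ℤ)⟧') :=
    ⟨hT0', hT.lift_mor₂ _ htri₂ hT1', (shiftFunctor C (2:ℤ)).isIso_of_comp_map_eq hmin⟩
  have hνg : Arrow.mk (ν.map (MbarMap T g)) ≅ Arrow.mk (MbarMap T (g⟦(2:ℤ)⟧')) :=
    Arrow.isoMk (η T1 hT1) (η T0 hT0) (hη T1 T0 hT1 hT0 g).symm
  rw [← nonempty_arrow_iso_iff]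
  calc Nonempty (M ≅ M⟦(2:ℤ)⟧) ↔ Nonempty (Arrow.mk g ≅ Arrow.mk (g⟦(2:ℤ)⟧')) :=
        hw.nonempty_iso_iff _ _ htri htri₂ hw₂
    _ ↔ Nonempty (Arrow.mk (MbarMap T g) ≅ Arrow.mk (MbarMap T (g⟦(2:ℤ)⟧'))) :=
        nonempty_arrow_iso_iff_MbarMap hT1 hT0 hT1' hT0' _ _
    _ ↔ Nonempty (Arrow.mk (ν.map (MbarMap T g)) ≅ Arrow.mk (MbarMap T g)) :=
        ⟨fun ⟨e⟩ => ⟨hνg ≪≫ e.symm⟩, fun ⟨e⟩ => ⟨(hνg.symm ≪≫ e).symm⟩⟩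
end
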